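/- Let λ > 0 and let x, y ≥ 0 satisfy √x + √y ≤ λ. Define g : [0, λ] → ℝ by g(s) = x − 2√x·s for s ∈ [0, √x]; g(s) = −s² for s ∈ [√x, λ − √y]; and g(s) = −(λ − √y)² − 2(λ − √y)·(s − (λ − √y)) for s ∈ [λ − √y, λ]. Then g is well defined (the pieces agree at the junction points), continuous and concave, satisfies g(0) = x, g(λ) = y − λ², g(s) ≥ −s² for all s ∈ [0, λ], and (1/4)·∫₀^λ |g′(s)|² ds = (2/3)x^{3/2} + (λ − √y)²·√y + (1/3)(λ − √y)³. -/

import Mathlib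

/-!
With `a = √x` and `b = λ − √y`, the minimizer is `g(s) = a² − 2as − (s − a)₊² + (s − b)₊²`:
the two positive-part squares bend the tangent line at `a` onto the parabola and off it again
at `b`. Since `u ↦ u₊²` is `C¹` with derivative `2u₊`, `g′(s) = −2 · clamp(s, a, b)`, which is
antitone, so `g` is concave; `g(s) + s²` is the sum of `(s − a)² − (s − a)₊² ≥ 0` and
`(s − b)₊²`, so `g` dominates the parabola; and the energy `¼ ∫ g′²` is `∫ clamp²`, computed
piece by piece.
-/

open MeasureTheory

/-- The energy functional `E(x, y, λ) = (2/3)x^{3/2} + (λ − √y)²√y + (1/3)(λ − √y)³`. -/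
noncomputable def Efun (x y l : ℝ) : ℝ :=
  2 / 3 * x ^ (3 / 2 : ℝ) + (l - Real.sqrt y) ^ 2 * Real.sqrt y +
    1 / 3 * (l - Real.sqrt y) ^ 3

/-- The explicit minimizer of the parabola-avoidance variational problem: the tangent line
to the parabola `s ↦ −s²` through `(0, x)`, an arc of the parabola, and the tangent line
through `(λ, y − λ²)`. -/
noncomputable def gmin (x y l : ℝ) (s : ℝ) : ℝ :=
  if s ≤ Real.sqrt x then x - 2 * Real.sqrt x * s
  else if s ≤ l - Real.sqrt y then -s ^ 2
  else -(l - Real.sqrt y) ^ 2 - 2 * (l - Real.sqrt y) * (s - (l - Real.sqrt y))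

open Set

theorem hasDerivAt_max_zero_sq (t : ℝ) :
    HasDerivAt (fun u : ℝ => max u 0 ^ 2) (2 * max t 0) t := by
  have hleft : ∀ t ≤ 0, HasDerivWithinAt (fun u : ℝ => max u 0 ^ 2) 0 (Iic 0) t :=
    fun t ht => (hasDerivWithinAt_const t _ 0).congr
      (fun u hu => by simp [max_eq_right (mem_Iic.mp hu)]) (by simp [ht])
  have hright : ∀ t ≥ 0, HasDerivWithinAt (fun u : ℝ => max u 0 ^ 2) (2 * t) (Ici 0) t :=
    fun t ht => ((hasDerivAt_pow 2 t).hasDerivWithinAt.congr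
      (fun u hu => by simp [max_eq_left (mem_Ici.mp hu)]) (by simp [ht])).congr_deriv (by ring)
  rcases lt_trichotomy t 0 with ht | rfl | ht
  · simpa [max_eq_right ht.le] using (hleft t ht.le).hasDerivAt (Iic_mem_nhds ht)
  · simpa [← hasDerivWithinAt_univ] using
      (hleft 0 le_rfl).union ((hright 0 le_rfl).congr_deriv (mul_zero 2))
  · simpa [max_eq_left ht.le] using (hright t ht.le).hasDerivAt (Ici_mem_nhds ht)

noncomputable def tangentArc (a b s : ℝ) : ℝ :=
  a ^ 2 - 2 * a * s - max (s - a) 0 ^ 2 + max (s - b) 0 ^ 2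

section TangentArc

variable {a b : ℝ}

theorem tangentArc_of_le_left (hab : a ≤ b) {s : ℝ} (hs : s ≤ a) :
    tangentArc a b s = a ^ 2 - 2 * a * s := by
  simp [tangentArc, max_eq_right (sub_nonpos.mpr hs), max_eq_right (sub_nonpos.mpr (hs.trans hab))]

theorem tangentArc_of_mem_Icc {s : ℝ} (hs : s ∈ Icc a b) : tangentArc a b s = -s ^ 2 := by
  rw [tangentArc, max_eq_left (sub_nonneg.mpr hs.1), max_eq_right (sub_nonpos.mpr hs.2)]
  ring

theorem tangentArc_of_right_le (hab : a ≤ b) {s : ℝ} (hs : b ≤ s) :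
    tangentArc a b s = b ^ 2 - 2 * b * s := by
  rw [tangentArc, max_eq_left (sub_nonneg.mpr (hab.trans hs)), max_eq_left (sub_nonneg.mpr hs)]
  ring

theorem neg_sq_le_tangentArc (a b s : ℝ) : -s ^ 2 ≤ tangentArc a b s := by
  have hpos : max (s - a) 0 ^ 2 ≤ (s - a) ^ 2 := by
    rcases le_total (s - a) 0 with h | h <;> simp [h, sq_nonneg]
  rw [tangentArc]
  nlinarith [sq_nonneg (max (s - b) 0)]

theorem max_min_eq_add_max_sub_max (hab : a ≤ b) (s : ℝ) :
    max a (min s b) = a + max (s - a) 0 - max (s - b) 0 := by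
  rcases le_total s a with hsa | has
  · simp [hsa, hsa.trans hab]
  rcases le_total s b with hsb | hbs
  · simp [hsb, has]
  · simp [hbs, hab, hab.trans hbs]

theorem hasDerivAt_tangentArc (hab : a ≤ b) (s : ℝ) :
    HasDerivAt (tangentArc a b) (-2 * max a (min s b)) s := by
  have hsq : ∀ c, HasDerivAt (fun u => max (u - c) 0 ^ 2) (2 * max (s - c) 0) s := fun c => by
    simpa [Function.comp_def] using
      (hasDerivAt_max_zero_sq (s - c)).comp s ((hasDerivAt_id s).sub_const c)
  have h := ((((hasDerivAt_id s).const_mul (2 * a)).const_sub (a ^ 2)).sub (hsq a)).add (hsq b)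
  refine h.congr_deriv ?_
  rw [max_min_eq_add_max_sub_max hab]
  ring

theorem concaveOn_tangentArc (hab : a ≤ b) : ConcaveOn ℝ univ (tangentArc a b) := by
  refine Antitone.concaveOn_univ_of_deriv (fun s => (hasDerivAt_tangentArc hab s).differentiableAt)
    fun s t hst => ?_
  rw [(hasDerivAt_tangentArc hab s).deriv, (hasDerivAt_tangentArc hab t).deriv]
  have : max a (min s b) ≤ max a (min t b) := max_le_max_left a (min_le_min_right b hst)
  linarith

end TangentArc

theorem gmin_eq_tangentArc {x y l : ℝ} (hx : 0 ≤ x) (hab : Real.sqrt x ≤ l - Real.sqrt y) :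
    gmin x y l = tangentArc (Real.sqrt x) (l - Real.sqrt y) := by
  funext s
  unfold gmin
  split_ifs with ha hb
  · rw [tangentArc_of_le_left hab ha, Real.sq_sqrt hx]
  · exact (tangentArc_of_mem_Icc ⟨(not_le.mp ha).le, hb⟩).symm
  · rw [tangentArc_of_right_le hab (not_le.mp hb).le]
    ring

theorem integral_max_min_sq {a b c d : ℝ} (hca : c ≤ a) (hab : a ≤ b) (hbd : b ≤ d) :
    ∫ s in c..d, max a (min s b) ^ 2 = a ^ 2 * (a - c) + (b ^ 3 - a ^ 3) / 3 + b ^ 2 * (d - b) := by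
  have hint : ∀ u v : ℝ, IntervalIntegrable (fun s => max a (min s b) ^ 2) volume u v :=
    fun u v => (by fun_prop : Continuous fun s : ℝ => max a (min s b) ^ 2).intervalIntegrable u v
  rw [← intervalIntegral.integral_add_adjacent_intervals (hint c a) (hint a d),
    ← intervalIntegral.integral_add_adjacent_intervals (hint a b) (hint b d)]
  have h₁ : ∫ s in c..a, max a (min s b) ^ 2 = ∫ _ in c..a, a ^ 2 :=
    intervalIntegral.integral_congr fun s hs => by
      rw [uIcc_of_le hca] at hs
      simp [min_eq_left (hs.2.trans hab), hs.2]
  have h₂ : ∫ s in a..b, max a (min s b) ^ 2 = ∫ s in a..b, s ^ 2 :=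
    intervalIntegral.integral_congr fun s hs => by
      rw [uIcc_of_le hab] at hs
      simp [min_eq_left hs.2, hs.1]
  have h₃ : ∫ s in b..d, max a (min s b) ^ 2 = ∫ _ in b..d, b ^ 2 :=
    intervalIntegral.integral_congr fun s hs => by
      rw [uIcc_of_le hbd] at hs
      simp [min_eq_right hs.1, hab]
  rw [h₁, h₂, h₃, integral_pow]
  simp only [intervalIntegral.integral_const, smul_eq_mul]
  ring

theorem gmin_properties (l x y : ℝ) (hx : 0 ≤ x) (hy : 0 ≤ y)
    (hxy : Real.sqrt x + Real.sqrt y ≤ l) :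
    ContinuousOn (gmin x y l) (Set.Icc 0 l) ∧
    ConcaveOn ℝ (Set.Icc 0 l) (gmin x y l) ∧
    gmin x y l 0 = x ∧
    gmin x y l l = y - l ^ 2 ∧
    (∀ s ∈ Set.Icc (0 : ℝ) l, -s ^ 2 ≤ gmin x y l s) ∧
    1 / 4 * ∫ s in (0 : ℝ)..l, deriv (gmin x y l) s ^ 2 = Efun x y l := by
  have ha : 0 ≤ Real.sqrt x := Real.sqrt_nonneg x
  have hab : Real.sqrt x ≤ l - Real.sqrt y := by linarith
  have hbl : l - Real.sqrt y ≤ l := by linarith [Real.sqrt_nonneg y]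
  have hderiv := hasDerivAt_tangentArc hab
  have hx32 : x ^ (3 / 2 : ℝ) = Real.sqrt x ^ 3 := by
    rw [Real.rpow_div_two_eq_sqrt 3 hx]
    norm_cast
  rw [gmin_eq_tangentArc hx hab]
  refine ⟨fun s _ => (hderiv s).continuousAt.continuousWithinAt,
    (concaveOn_tangentArc hab).subset (subset_univ _) (convex_Icc 0 l), ?_, ?_,
    fun s _ => neg_sq_le_tangentArc _ _ s, ?_⟩
  · rw [tangentArc_of_le_left hab ha, Real.sq_sqrt hx]
    ring
  · rw [tangentArc_of_right_le hab hbl]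
    linear_combination Real.sq_sqrt hy
  · simp_rw [fun s => (hderiv s).deriv, mul_pow, intervalIntegral.integral_const_mul,
      integral_max_min_sq ha hab hbl, Efun, hx32]
    ring
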